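/- arXiv:2601.00632 — 2 statements merged into one kernel-verified Lean document; each statement's English description precedes it below -/
import Mathlib

section
/- The Bures–Wasserstein exponential and logarithm are inverse: for Σ, Σ̄ ∈ Sym⁺⁺_d, setting T = log_Σ(Σ̄) := Σ̄ (Σ Σ̄)^{-1/2} - I, one has (I + T) Σ (I + T) = Σ̄, where (Σ Σ̄)^{-1/2} denotes the inverse of the principal square root of Σ Σ̄. -/
open Matrix

/-- The Bures–Wasserstein exponential and logarithm are inverse: for positive definite
`Sig`, `SigBar`, if `S` is the principal square root of `Sig * SigBar` (characterized by
`S * S = Sig * SigBar` together with `R⁻¹ * S * R` positive definite, where `R` is the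
positive definite square root of `Sig`), then with `T = SigBar * S⁻¹ - I` one has
`(I + T) * Sig * (I + T) = SigBar`. -/
theorem bw_exp_log_inverse {d : ℕ} (Sig SigBar S R : Matrix (Fin d) (Fin d) ℝ)
    (hSig : Sig.PosDef) (hSigBar : SigBar.PosDef)
    (hR : R.PosDef) (hRsq : R * R = Sig)
    (hSsq : S * S = Sig * SigBar) (hprin : (R⁻¹ * S * R).PosDef) :
    (1 + (SigBar * S⁻¹ - 1)) * Sig * (1 + (SigBar * S⁻¹ - 1)) = SigBar := by
  have hSigDet : IsUnit Sig.det := isUnit_iff_ne_zero.2 (ne_of_gt hSig.det_pos)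
  have hSBarDet : IsUnit SigBar.det := isUnit_iff_ne_zero.2 (ne_of_gt hSigBar.det_pos)
  have hSdet : IsUnit S.det := by
    have : S.det * S.det = Sig.det * SigBar.det := by
      rw [← det_mul, ← det_mul, hSsq]
    refine isUnit_iff_ne_zero.2 fun h => ?_
    rw [h, mul_zero] at this
    exact (mul_pos hSig.det_pos hSigBar.det_pos).ne this
  have h1 : (1 : Matrix (Fin d) (Fin d) ℝ) + (SigBar * S⁻¹ - 1) = SigBar * S⁻¹ := by abel
  rw [h1]
  have key : SigBar * S⁻¹ = Sig⁻¹ * S := by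
    have : Sig⁻¹ * (S * S) * S⁻¹ = SigBar * S⁻¹ := by
      rw [hSsq, ← Matrix.mul_assoc, Matrix.nonsing_inv_mul _ hSigDet, Matrix.one_mul]
    rw [← this, Matrix.mul_assoc, Matrix.mul_assoc, Matrix.mul_nonsing_inv _ hSdet,
      Matrix.mul_one]
  rw [key]
  calc Sig⁻¹ * S * Sig * (Sig⁻¹ * S)
      = Sig⁻¹ * S * (Sig * Sig⁻¹) * S := by noncomm_ring
    _ = Sig⁻¹ * (S * S) := by
        rw [Matrix.mul_nonsing_inv _ hSigDet, Matrix.mul_one, Matrix.mul_assoc]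
    _ = SigBar := by
        rw [hSsq, ← Matrix.mul_assoc, Matrix.nonsing_inv_mul _ hSigDet, Matrix.one_mul]
end

section
/- The set {T ∈ Sym_d : T ≻ -I} (equivalently Sym⁺⁺_d - I) is an open convex cone-translate in Sym_d, and the extended exponential map T ↦ (I+T)Σ⁰(I+T) restricted to this set is a bijection onto Sym⁺⁺_d, with inverse Σ ↦ Σ(Σ⁰Σ)^{-1/2} - I. -/
/-!
Put `P = 1 + T`, so the map is `P ↦ P Σ⁰ P` on positive definite `P`, and write `Σ⁰ = R²` with
`R ≻ 0`. If `Σ = P Σ⁰ P`, then `Σ⁰ P` squares to `Σ⁰ Σ` and `R⁻¹ (Σ⁰ P) R = R P R ≻ 0`; since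
positive definite square roots are unique, `(Σ⁰ Σ)^{1/2} = Σ⁰ P`, whence `P = Σ (Σ⁰ Σ)^{-1/2}`.
Conversely `Σ (Σ⁰ Σ)^{-1/2} = Σ⁰⁻¹ (Σ⁰ Σ)^{1/2} = R⁻¹ (R⁻¹ (Σ⁰ Σ)^{1/2} R) R⁻¹ ≻ 0`, and its
image under the map is `Σ`. Openness holds because a symmetric matrix is positive definite iff its
quadratic form is positive on the compact unit sphere.
-/

open Matrix
open scoped ComplexOrder

namespace Matrix

variable {n 𝕜 : Type*} [RCLike 𝕜]

theorem convex_setOf_posDef : Convex ℝ {M : Matrix n n 𝕜 | M.PosDef} :=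
  convex_iff_forall_pos.mpr fun _ hA _ hB _ _ ha hb _ => (hA.smul ha).add (hB.smul hb)

theorem setOf_isSymm_and_one_add_posDef [DecidableEq n] :
    {T : Matrix n n ℝ | T.IsSymm ∧ (1 + T).PosDef} = (1 + ·) ⁻¹' {P | P.PosDef} := by
  refine Set.ext fun T => and_iff_right_of_imp fun hT => ?_
  simpa using (isHermitian_iff_isSymm.mp hT.1).sub isSymm_one

section Open

variable [Fintype n]

theorem isOpen_setOf_forall_dotProduct_mulVec_pos {K : Set (n → ℝ)} (hK : IsCompact K) :
    IsOpen {M : Matrix n n ℝ | ∀ x ∈ K, 0 < x ⬝ᵥ (M *ᵥ x)} := by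
  refine isOpen_iff_mem_nhds.mpr fun M hM => hK.eventually_forall_of_forall_eventually
    fun x hx => ?_
  have hq : Continuous fun z : Matrix n n ℝ × (n → ℝ) => z.2 ⬝ᵥ (z.1 *ᵥ z.2) :=
    continuous_snd.dotProduct (continuous_fst.matrix_mulVec continuous_snd)
  exact hq.continuousAt.eventually (lt_mem_nhds (hM x hx))

theorem IsHermitian.posDef_iff_forall_mem_sphere {M : Matrix n n ℝ} (hM : M.IsHermitian) :
    M.PosDef ↔ ∀ x ∈ Metric.sphere (0 : n → ℝ) 1, 0 < x ⬝ᵥ (M *ᵥ x) := by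
  refine ⟨fun h x hx => ?_, fun h => .of_dotProduct_mulVec_pos hM fun x hx => ?_⟩
  · simpa using h.dotProduct_mulVec_pos (ne_zero_of_mem_unit_sphere ⟨x, hx⟩)
  · have hx' : 0 < ‖x‖ := norm_pos_iff.mpr hx
    have hunit : ‖x‖⁻¹ • x ∈ Metric.sphere (0 : n → ℝ) 1 := by
      rw [mem_sphere_zero_iff_norm, norm_smul, norm_inv, norm_norm, inv_mul_cancel₀ hx'.ne']
    have hscale : x ⬝ᵥ (M *ᵥ x) = ‖x‖ * ‖x‖ * ((‖x‖⁻¹ • x) ⬝ᵥ (M *ᵥ (‖x‖⁻¹ • x))) := by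
      rw [mulVec_smul, dotProduct_smul, smul_dotProduct, smul_eq_mul, smul_eq_mul]
      field_simp
    rw [star_trivial, hscale]
    exact mul_pos (mul_pos hx' hx') (h _ hunit)

theorem isOpen_setOf_posDef_selfAdjoint :
    IsOpen {M : selfAdjoint (Matrix n n ℝ) | (M : Matrix n n ℝ).PosDef} := by
  have hsphere : {M : selfAdjoint (Matrix n n ℝ) | (M : Matrix n n ℝ).PosDef} =
      Subtype.val ⁻¹' {M | ∀ x ∈ Metric.sphere (0 : n → ℝ) 1, 0 < x ⬝ᵥ (M *ᵥ x)} :=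
    Set.ext fun M => IsHermitian.posDef_iff_forall_mem_sphere M.2
  rw [hsphere]
  exact (isOpen_setOf_forall_dotProduct_mulVec_pos (isCompact_sphere 0 1)).preimage
    continuous_subtype_val

end Open

variable [Fintype n] [DecidableEq n]

theorem PosDef.eq_of_mul_self_eq {A B : Matrix n n 𝕜} (hA : A.PosDef) (hB : B.PosDef)
    (h : A * A = B * B) : A = B := by
  open MatrixOrder in
  exact (CFC.mul_self_eq_mul_self_iff A B hA.posSemidef.nonneg hB.posSemidef.nonneg).mp h

theorem PosDef.mul_mul_self_of_isHermitian {A P : Matrix n n 𝕜} (hA : A.PosDef)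
    (hP : P.IsHermitian) (hPu : IsUnit P) : (P * A * P).PosDef := by
  simpa only [star_eq_conjTranspose, hP.eq] using hPu.posDef_star_left_conjugate_iff.mpr hA

theorem PosDef.mul_self {A : Matrix n n 𝕜} (hA : A.PosDef) : (A * A).PosDef := by
  simpa using PosDef.one.mul_mul_self_of_isHermitian hA.1 hA.isUnit

theorem eq_of_mul_self_eq_of_posDef_conj {R X Y : Matrix n n 𝕜} (hR : IsUnit R)
    (hX : (R⁻¹ * X * R).PosDef) (hY : (R⁻¹ * Y * R).PosDef) (h : X * X = Y * Y) : X = Y := by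
  have hRdet := (isUnit_iff_isUnit_det R).mp hR
  have conj_mul_self (Z : Matrix n n 𝕜) :
      R⁻¹ * Z * R * (R⁻¹ * Z * R) = R⁻¹ * (Z * Z) * R := by
    simp only [Matrix.mul_assoc, mul_nonsing_inv_cancel_left _ _ hRdet]
  have hconj := hX.eq_of_mul_self_eq hY (by rw [conj_mul_self, conj_mul_self, h])
  exact (isUnit_nonsing_inv_iff.mpr hR).mul_left_cancel (hR.mul_right_cancel hconj)

theorem mul_inv_eq_inv_mul_of_mul_self_eq {A S G : Matrix n n 𝕜} (hA : IsUnit A)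
    (hS : IsUnit S) (h : G * G = A * S) : S * G⁻¹ = A⁻¹ * G := by
  have hG : IsUnit G := isUnit_of_mul_isUnit_left (h ▸ hA.mul hS)
  rw [← nonsing_inv_mul_cancel_left (A := A) S ((isUnit_iff_isUnit_det A).mp hA), ← h]
  simp only [Matrix.mul_assoc, mul_nonsing_inv _ ((isUnit_iff_isUnit_det G).mp hG),
    Matrix.mul_one]

section BuresWasserstein

variable {R : Matrix n n 𝕜} {g : Matrix n n 𝕜 → Matrix n n 𝕜}

theorem mapsTo_mul_mul_self_posDef (hR : R.PosDef) :
    Set.MapsTo (fun P => P * (R * R) * P) {P : Matrix n n 𝕜 | P.PosDef} {S | S.PosDef} :=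
  fun _ hP => hR.mul_self.mul_mul_self_of_isHermitian hP.1 hP.isUnit

theorem sqrt_mul_mul_self_eq (hR : R.PosDef)
    (hg : ∀ S : Matrix n n 𝕜, S.PosDef → g S * g S = R * R * S ∧ (R⁻¹ * g S * R).PosDef)
    {P : Matrix n n 𝕜} (hP : P.PosDef) : g (P * (R * R) * P) = R * R * P := by
  obtain ⟨hsq, hconj⟩ := hg _ (mapsTo_mul_mul_self_posDef hR hP)
  refine eq_of_mul_self_eq_of_posDef_conj hR.isUnit hconj ?_ ?_
  · have hRdet := (isUnit_iff_isUnit_det R).mp hR.isUnit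
    have hRPR : R⁻¹ * (R * R * P) * R = R * P * R := by
      simp only [Matrix.mul_assoc, nonsing_inv_mul_cancel_left _ _ hRdet]
    rw [hRPR]
    exact hP.mul_mul_self_of_isHermitian hR.1 hR.isUnit
  · rw [hsq]
    simp only [Matrix.mul_assoc]

theorem mapsTo_mul_inv_sqrt (hR : R.PosDef)
    (hg : ∀ S : Matrix n n 𝕜, S.PosDef → g S * g S = R * R * S ∧ (R⁻¹ * g S * R).PosDef) :
    Set.MapsTo (fun S => S * (g S)⁻¹) {S : Matrix n n 𝕜 | S.PosDef} {P | P.PosDef} := by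
  intro S hS
  obtain ⟨hsq, hconj⟩ := hg S hS
  have hRdet := (isUnit_iff_isUnit_det R).mp hR.isUnit
  have hconj_inv : S * (g S)⁻¹ = R⁻¹ * (R⁻¹ * g S * R) * R⁻¹ := by
    rw [mul_inv_eq_inv_mul_of_mul_self_eq hR.mul_self.isUnit hS.isUnit hsq, Matrix.mul_inv_rev]
    simp only [Matrix.mul_assoc, mul_nonsing_inv _ hRdet, Matrix.mul_one]
  change (S * (g S)⁻¹).PosDef
  rw [hconj_inv]
  exact hconj.mul_mul_self_of_isHermitian hR.1.inv hR.inv.isUnit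

theorem invOn_mul_inv_sqrt (hR : R.PosDef)
    (hg : ∀ S : Matrix n n 𝕜, S.PosDef → g S * g S = R * R * S ∧ (R⁻¹ * g S * R).PosDef) :
    Set.InvOn (fun S => S * (g S)⁻¹) (fun P => P * (R * R) * P)
      {P : Matrix n n 𝕜 | P.PosDef} {S | S.PosDef} := by
  have hR2det := (isUnit_iff_isUnit_det _).mp hR.mul_self.isUnit
  constructor
  · intro P hP
    have hPdet := (isUnit_iff_isUnit_det P).mp hP.isUnit
    change P * (R * R) * P * (g (P * (R * R) * P))⁻¹ = P
    rw [sqrt_mul_mul_self_eq hR hg hP, Matrix.mul_inv_rev, Matrix.mul_assoc,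
      mul_nonsing_inv_cancel_left _ _ hPdet, mul_nonsing_inv_cancel_right _ _ hR2det]
  · intro S hS
    obtain ⟨hsq, -⟩ := hg S hS
    change S * (g S)⁻¹ * (R * R) * (S * (g S)⁻¹) = S
    simp only [mul_inv_eq_inv_mul_of_mul_self_eq hR.mul_self.isUnit hS.isUnit hsq,
      Matrix.mul_assoc, mul_nonsing_inv_cancel_left _ _ hR2det]
    rw [hsq, nonsing_inv_mul_cancel_left _ _ hR2det]

end BuresWasserstein

end Matrix

theorem bw_exp_bijection_general {d : ℕ} (Sig0 R : Matrix (Fin d) (Fin d) ℝ)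
    (hR : R.PosDef) (hRsq : R * R = Sig0)
    (g : Matrix (Fin d) (Fin d) ℝ → Matrix (Fin d) (Fin d) ℝ)
    (hg : ∀ Sg : Matrix (Fin d) (Fin d) ℝ, Sg.PosDef →
      g Sg * g Sg = Sig0 * Sg ∧ (R⁻¹ * g Sg * R).PosDef) :
    IsOpen {T : selfAdjoint (Matrix (Fin d) (Fin d) ℝ) |
        (1 + (T : Matrix (Fin d) (Fin d) ℝ)).PosDef} ∧
    Convex ℝ {T : Matrix (Fin d) (Fin d) ℝ | T.IsSymm ∧ (1 + T).PosDef} ∧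
    Set.BijOn (fun T => (1 + T) * Sig0 * (1 + T))
      {T : Matrix (Fin d) (Fin d) ℝ | T.IsSymm ∧ (1 + T).PosDef}
      {Sg : Matrix (Fin d) (Fin d) ℝ | Sg.PosDef} ∧
    Set.InvOn (fun Sg => Sg * (g Sg)⁻¹ - 1) (fun T => (1 + T) * Sig0 * (1 + T))
      {T : Matrix (Fin d) (Fin d) ℝ | T.IsSymm ∧ (1 + T).PosDef}
      {Sg : Matrix (Fin d) (Fin d) ℝ | Sg.PosDef} := by
  subst hRsq
  rw [setOf_isSymm_and_one_add_posDef]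
  have hshift : Set.InvOn (· - 1) (1 + ·) ((1 + ·) ⁻¹' {P : Matrix (Fin d) (Fin d) ℝ | P.PosDef})
      {P | P.PosDef} :=
    ⟨fun T _ => add_sub_cancel_left 1 T, fun P _ => add_sub_cancel 1 P⟩
  have hsub_one_mapsTo : Set.MapsTo (· - 1) {P : Matrix (Fin d) (Fin d) ℝ | P.PosDef}
      ((1 + ·) ⁻¹' {P | P.PosDef}) := fun P hP => by simpa using hP
  have hinv := hshift.comp (invOn_mul_inv_sqrt hR hg) (Set.mapsTo_preimage _ _)
    (mapsTo_mul_inv_sqrt hR hg)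
  refine ⟨isOpen_setOf_posDef_selfAdjoint.preimage (continuous_const_add 1),
    convex_setOf_posDef.translate_preimage_right 1, hinv.bijOn ?_ ?_, hinv⟩
  · exact (mapsTo_mul_mul_self_posDef hR).comp (Set.mapsTo_preimage _ _)
  · exact hsub_one_mapsTo.comp (mapsTo_mul_inv_sqrt hR hg)

/-- The set `{T ∈ Sym_d : T ≻ -I}` (equivalently `Sym⁺⁺_d - I`) is an open convex subset
of `Sym_d`, and the extended exponential map `T ↦ (I+T) Σ⁰ (I+T)` restricted to it is a
bijection onto `Sym⁺⁺_d`, with inverse `Σ ↦ Σ (Σ⁰ Σ)^{-1/2} - I`.  Here `g Σ` denotes the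
principal square root of `Σ⁰ Σ` (characterized by `g Σ * g Σ = Σ⁰ Σ` and positive
definiteness of the conjugate `R⁻¹ (g Σ) R`, `R` the positive square root of `Σ⁰`). -/
theorem bw_exp_bijection {d : ℕ} (Sig0 R : Matrix (Fin d) (Fin d) ℝ)
    (hSig0 : Sig0.PosDef) (hR : R.PosDef) (hRsq : R * R = Sig0)
    (g : Matrix (Fin d) (Fin d) ℝ → Matrix (Fin d) (Fin d) ℝ)
    (hg : ∀ Sg : Matrix (Fin d) (Fin d) ℝ, Sg.PosDef →
      g Sg * g Sg = Sig0 * Sg ∧ (R⁻¹ * g Sg * R).PosDef) :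
    IsOpen {T : selfAdjoint (Matrix (Fin d) (Fin d) ℝ) |
        (1 + (T : Matrix (Fin d) (Fin d) ℝ)).PosDef} ∧
    Convex ℝ {T : Matrix (Fin d) (Fin d) ℝ | T.IsSymm ∧ (1 + T).PosDef} ∧
    Set.BijOn (fun T => (1 + T) * Sig0 * (1 + T))
      {T : Matrix (Fin d) (Fin d) ℝ | T.IsSymm ∧ (1 + T).PosDef}
      {Sg : Matrix (Fin d) (Fin d) ℝ | Sg.PosDef} ∧
    Set.InvOn (fun Sg => Sg * (g Sg)⁻¹ - 1) (fun T => (1 + T) * Sig0 * (1 + T))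
      {T : Matrix (Fin d) (Fin d) ℝ | T.IsSymm ∧ (1 + T).PosDef}
      {Sg : Matrix (Fin d) (Fin d) ℝ | Sg.PosDef} :=
  bw_exp_bijection_general Sig0 R hR hRsq g hg
end
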